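/- arXiv:2303.09532 — 3 statements merged into one kernel-verified Lean document; each statement's English description precedes it below -/
import Mathlib

section
/- Let f : ℝⁿ → ℝ be C¹ and strictly convex with unique global minimizer ȳ, and let φ : ℝⁿ → ℝ be C², strictly convex, Legendre type, with conjugate φ*, such that x ↦ D_{φ*}(x, x̄) is radially unbounded, where x̄ := ∇φ(ȳ). If x : [0, ∞) → ℝⁿ solves the mirror descent closed-loop system ẋ(t) = −∇f(∇φ*(x(t))), x(0) = x₀, and the solution is defined for all t ≥ 0, then x(t) → x̄ as t → ∞; in particular the control u(t) = −∇f(∇φ*(x(t))) is stabilizing at x₀. -/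
open scoped RealInnerProductSpace
open Filter MeasureTheory

/-- Legendre–Fenchel conjugate: `ψ*(v) = sup_x { ⟨v, x⟩ − ψ(x) }`. -/
noncomputable def fenchel {n : ℕ} (ψ : EuclideanSpace ℝ (Fin n) → ℝ)
    (v : EuclideanSpace ℝ (Fin n)) : ℝ :=
  ⨆ z : EuclideanSpace ℝ (Fin n), (⟪v, z⟫ - ψ z)

/-- Bregman divergence: `D_ψ(y, y') = ψ(y) − ψ(y') − ⟨∇ψ(y'), y − y'⟩`. -/
noncomputable def bregman {n : ℕ} (ψ : EuclideanSpace ℝ (Fin n) → ℝ)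
    (y y' : EuclideanSpace ℝ (Fin n)) : ℝ :=
  ψ y - ψ y' - ⟪gradient ψ y', y - y'⟫

/-- `φ` is of Legendre type: `|∇φ(x)| → ∞` as `|x| → ∞`. -/
def LegendreType {n : ℕ} (φ : EuclideanSpace ℝ (Fin n) → ℝ) : Prop :=
  Tendsto (fun z => ‖gradient φ z‖) (cocompact (EuclideanSpace ℝ (Fin n))) atTop

/-!
Along the flow, `V(t) = D_{φ*}(x(t), x̄)` is a Lyapunov function. Since `∇φ*` inverts `∇φ` (a
homeomorphism, `φ` being strictly convex and of Legendre type), with `y = ∇φ*(x)` one gets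
`V' = -⟪∇f(y), y - ȳ⟫ ≤ f(ȳ) - f(y) ≤ 0`, with equality only at `x = x̄`. Radial unboundedness
keeps the trajectory in a compact sublevel set of `D_{φ*}(·, x̄)`, where its speed is bounded and
the dissipation is bounded below away from `x̄`. Hence every visit far from `x̄` costs `V` a fixed
amount, so there are only finitely many, and `x(t) → x̄`.
-/

open Set Metric Topology NNReal

section ConvexGradient

variable {E : Type*} [NormedAddCommGroup E] [InnerProductSpace ℝ E] [CompleteSpace E]
  {F : E → ℝ}

theorem ContDiff.continuous_gradient (hF : ContDiff ℝ 1 F) : Continuous (gradient F) :=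
  (InnerProductSpace.toDual ℝ E).symm.continuous.comp (hF.continuous_fderiv one_ne_zero)

theorem ConvexOn.add_inner_gradient_le (hc : ConvexOn ℝ univ F) {a : E}
    (ha : DifferentiableAt ℝ F a) (b : E) : F a + ⟪gradient F a, b - a⟫ ≤ F b := by
  have hline : HasDerivAt (F ∘ AffineMap.lineMap (k := ℝ) a b) ⟪gradient F a, b - a⟫ 0 := by
    rw [inner_gradient_left]
    have ha' : DifferentiableAt ℝ F (AffineMap.lineMap (k := ℝ) a b 0) := by simpa using ha
    simpa using ha'.hasFDerivAt.comp_hasDerivAt 0 AffineMap.hasDerivAt_lineMap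
  have := (hc.comp_affineMap _).le_slope_of_hasDerivAt (mem_univ 0) (mem_univ 1) one_pos hline
  simp only [slope_def_field, Function.comp_apply, AffineMap.lineMap_apply_one,
    AffineMap.lineMap_apply_zero, sub_zero, div_one] at this
  linarith

theorem StrictConvexOn.add_inner_gradient_lt (hc : StrictConvexOn ℝ univ F) {a b : E}
    (ha : DifferentiableAt ℝ F a) (hab : a ≠ b) : F a + ⟪gradient F a, b - a⟫ < F b := by
  have hmid := hc.2 (mem_univ a) (mem_univ b) hab one_half_pos one_half_pos (add_halves 1)
  have hle := hc.convexOn.add_inner_gradient_le ha ((1 / 2 : ℝ) • a + (1 / 2 : ℝ) • b)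
  have hsub : (1 / 2 : ℝ) • a + (1 / 2 : ℝ) • b - a = (1 / 2 : ℝ) • (b - a) := by module
  rw [hsub, real_inner_smul_right] at hle
  simp only [smul_eq_mul] at hmid
  linarith

theorem ConvexOn.inner_gradient_sub_gradient_nonneg (hc : ConvexOn ℝ univ F)
    (hF : Differentiable ℝ F) (a b : E) : 0 ≤ ⟪gradient F b - gradient F a, b - a⟫ := by
  have hab := hc.add_inner_gradient_le (hF a) b
  have hba := hc.add_inner_gradient_le (hF b) a
  rw [← neg_sub b a, inner_neg_right] at hba
  rw [inner_sub_left]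
  linarith

theorem StrictConvexOn.injective_gradient (hc : StrictConvexOn ℝ univ F)
    (hF : Differentiable ℝ F) : Function.Injective (gradient F) := by
  intro a b hab
  by_contra hne
  have hab' := hc.add_inner_gradient_lt (hF a) hne
  have hba := hc.add_inner_gradient_lt (hF b) (Ne.symm hne)
  rw [← neg_sub b a, inner_neg_right, ← hab] at hba
  linarith

theorem ConvexOn.inner_gradient_sub_nonneg_of_forall_le (hc : ConvexOn ℝ univ F) {a b : E}
    (ha : DifferentiableAt ℝ F a) (hb : ∀ z, F b ≤ F z) : 0 ≤ ⟪gradient F a, a - b⟫ := by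
  have := hc.add_inner_gradient_le ha b
  rw [← neg_sub a b, inner_neg_right] at this
  linarith [hb a]

theorem StrictConvexOn.inner_gradient_sub_pos_of_forall_le (hc : StrictConvexOn ℝ univ F)
    {a b : E} (ha : DifferentiableAt ℝ F a) (hb : ∀ z, F b ≤ F z) (hab : a ≠ b) :
    0 < ⟪gradient F a, a - b⟫ := by
  have := hc.add_inner_gradient_lt ha hab
  rw [← neg_sub a b, inner_neg_right] at this
  linarith [hb a]

theorem IsMinOn.inner_gradient_sub_nonneg {s : Set E} (hs : Convex ℝ s) {z w : E}
    (hz : z ∈ s) (hw : w ∈ s) (hmin : IsMinOn F s z) (hF : DifferentiableAt ℝ F z) :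
    0 ≤ ⟪gradient F z, w - z⟫ := by
  rw [inner_gradient_left]
  exact hmin.localize.hasFDerivWithinAt_nonneg hF.hasFDerivAt.hasFDerivWithinAt
    (sub_mem_posTangentConeAt_of_segment_subset (hs.segment_subset hz hw))

theorem IsLocalMin.gradient_eq_zero {z : E} (hmin : IsLocalMin F z) :
    gradient F z = 0 := by
  rw [gradient, hmin.fderiv_eq_zero, map_zero]

/-- Testing the first-order condition at `z` against `w = -(r / ‖∇F z‖) • ∇F z` gives
`r ‖∇F z‖ ≤ -⟪∇F z, z⟫`, and monotonicity of `∇F` between `0` and `z` bounds the right side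
by `r ‖∇F 0‖`. -/
theorem ConvexOn.norm_gradient_le_of_isMinOn_closedBall (hc : ConvexOn ℝ univ F)
    (hF : Differentiable ℝ F) {r : ℝ} (hr : 0 < r) {z : E} (hz : z ∈ closedBall 0 r)
    (hmin : IsMinOn F (closedBall 0 r) z) : ‖gradient F z‖ ≤ ‖gradient F 0‖ := by
  set g := gradient F z
  rcases eq_or_ne g 0 with hg | hg
  · simp [hg]
  have hgpos : 0 < ‖g‖ := norm_pos_iff.mpr hg
  set w : E := -(r / ‖g‖) • g
  have hw : w ∈ closedBall 0 r := by
    rw [mem_closedBall_zero_iff, norm_smul, norm_neg, Real.norm_of_nonneg (by positivity),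
      div_mul_cancel₀ _ hgpos.ne']
  have hgw : ⟪g, w⟫ = -(r * ‖g‖) := by
    rw [real_inner_smul_right, real_inner_self_eq_norm_sq]
    field_simp
  have hopt := hmin.inner_gradient_sub_nonneg (convex_closedBall 0 r) hz hw (hF z)
  have hmono := hc.inner_gradient_sub_gradient_nonneg hF 0 z
  have hcs : -(‖gradient F 0‖ * r) ≤ ⟪gradient F 0, z⟫ := by
    have := neg_le_of_abs_le (abs_real_inner_le_norm (gradient F 0) z)
    nlinarith [mem_closedBall_zero_iff.mp hz, norm_nonneg (gradient F 0)]
  rw [inner_sub_right, hgw] at hopt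
  rw [sub_zero, inner_sub_left] at hmono
  nlinarith

end ConvexGradient

section ProperSpace

variable {E : Type*} [NormedAddCommGroup E] [InnerProductSpace ℝ E] [ProperSpace E]
  {F : E → ℝ}

theorem ConvexOn.exists_gradient_eq_zero (hc : ConvexOn ℝ univ F) (hF : Differentiable ℝ F)
    (hgrad : Tendsto (fun z => ‖gradient F z‖) (cocompact E) atTop) :
    ∃ z, gradient F z = 0 := by
  rw [← Metric.cobounded_eq_cocompact, ← comap_norm_atTop] at hgrad
  obtain ⟨R, -, hR⟩ := (atTop_basis.comap norm).eventually_iff.mp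
    (hgrad.eventually_gt_atTop ‖gradient F 0‖)
  set r := max R 1
  obtain ⟨z, hz, hmin⟩ := (isCompact_closedBall (0 : E) r).exists_isMinOn
    (nonempty_closedBall.mpr (by positivity)) hF.continuous.continuousOn
  have hzr : ‖z‖ < r := by
    by_contra! hrz
    have := hR (le_trans (le_max_left R 1) hrz)
    have := hc.norm_gradient_le_of_isMinOn_closedBall hF (by positivity) hz hmin
    linarith
  refine ⟨z, IsLocalMin.gradient_eq_zero (hmin.isLocalMin ?_)⟩
  exact closedBall_mem_nhds_of_mem (mem_ball_zero_iff.mpr hzr)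

theorem ConvexOn.surjective_gradient (hc : ConvexOn ℝ univ F) (hF : Differentiable ℝ F)
    (hgrad : Tendsto (fun z => ‖gradient F z‖) (cocompact E) atTop) :
    Function.Surjective (gradient F) := by
  intro v
  have htilt : ∀ z, HasGradientAt (fun y => F y - ⟪v, y⟫) (gradient F z - v) z := by
    intro z
    convert hasFDerivAt_iff_hasGradientAt.mp
      ((hF z).hasFDerivAt.sub (innerSL ℝ v).hasFDerivAt) using 1
    · ext y; simp
    · rw [gradient, map_sub, sub_right_inj, LinearIsometryEquiv.eq_symm_apply]
      rfl
  have hcv : ConvexOn ℝ univ (fun y => F y - ⟪v, y⟫) :=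
    hc.sub ((innerSL ℝ v).toLinearMap.concaveOn convex_univ)
  obtain ⟨z, hz⟩ := hcv.exists_gradient_eq_zero (fun z => (htilt z).differentiableAt) <| by
    refine tendsto_atTop_mono (fun z => ?_) (tendsto_atTop_add_const_right _ (-‖v‖) hgrad)
    rw [(htilt z).gradient]
    linarith [norm_sub_norm_le (gradient F z) v]
  exact ⟨z, sub_eq_zero.mp ((htilt z).gradient ▸ hz)⟩

theorem isHomeomorph_gradient (hF : ContDiff ℝ 1 F) (hc : StrictConvexOn ℝ univ F)
    (hgrad : Tendsto (fun z => ‖gradient F z‖) (cocompact E) atTop) :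
    IsHomeomorph (gradient F) := by
  have hd : Differentiable ℝ F := hF.differentiable one_ne_zero
  have hcont : Continuous (gradient F) := hF.continuous_gradient
  have hcocompact : Tendsto (gradient F) (cocompact E) (cocompact E) := by
    rw [← Metric.cobounded_eq_cocompact, ← comap_norm_atTop] at hgrad ⊢
    exact tendsto_comap_iff.mpr hgrad
  refine isHomeomorph_iff_continuous_isClosedMap_bijective.mpr ⟨hcont, ?_, ?_⟩
  · exact (isProperMap_iff_tendsto_cocompact.mpr ⟨hcont, hcocompact⟩).isClosedMap
  · exact ⟨hc.injective_gradient hd, hc.convexOn.surjective_gradient hd hgrad⟩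

end ProperSpace

section Fenchel

variable {n : ℕ} {φ : EuclideanSpace ℝ (Fin n) → ℝ}

theorem fenchel_eq_of_gradient_eq (hc : ConvexOn ℝ univ φ) {y v : EuclideanSpace ℝ (Fin n)}
    (hy : DifferentiableAt ℝ φ y) (hyv : gradient φ y = v) : fenchel φ v = ⟪v, y⟫ - φ y := by
  have hle : ∀ z, ⟪v, z⟫ - φ z ≤ ⟪v, y⟫ - φ y := fun z => by
    have := hc.add_inner_gradient_le hy z
    rw [hyv, inner_sub_right] at this
    linarith
  exact le_antisymm (ciSup_le hle) (le_ciSup ⟨_, forall_mem_range.2 hle⟩ y)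

theorem inner_sub_le_fenchel (hc : ConvexOn ℝ univ φ) {y v : EuclideanSpace ℝ (Fin n)}
    (hy : DifferentiableAt ℝ φ y) (hyv : gradient φ y = v) (z : EuclideanSpace ℝ (Fin n)) :
    ⟪v, z⟫ - φ z ≤ fenchel φ v := by
  rw [fenchel_eq_of_gradient_eq hc hy hyv]
  have := hc.add_inner_gradient_le hy z
  rw [hyv, inner_sub_right] at this
  linarith

variable {Y : EuclideanSpace ℝ (Fin n) → EuclideanSpace ℝ (Fin n)}

theorem fenchel_sub_fenchel_sub_inner_nonneg (hc : ConvexOn ℝ univ φ)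
    (hd : Differentiable ℝ φ)
    (hY : ∀ v, gradient φ (Y v) = v) (v w : EuclideanSpace ℝ (Fin n)) :
    0 ≤ fenchel φ w - fenchel φ v - ⟪Y v, w - v⟫ := by
  have := inner_sub_le_fenchel hc (hd _) (hY w) (Y v)
  rw [fenchel_eq_of_gradient_eq hc (hd _) (hY v), inner_sub_right, real_inner_comm w (Y v),
    real_inner_comm v (Y v)]
  linarith

theorem fenchel_sub_fenchel_sub_inner_le (hc : ConvexOn ℝ univ φ)
    (hd : Differentiable ℝ φ)
    (hY : ∀ v, gradient φ (Y v) = v) (v w : EuclideanSpace ℝ (Fin n)) :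
    fenchel φ w - fenchel φ v - ⟪Y v, w - v⟫ ≤ ⟪w - v, Y w - Y v⟫ := by
  have := inner_sub_le_fenchel hc (hd _) (hY v) (Y w)
  rw [fenchel_eq_of_gradient_eq hc (hd _) (hY w)]
  simp only [inner_sub_left, inner_sub_right, real_inner_comm (Y v)]
  linarith

/-- The Bregman remainder of `φ*` at `v` is squeezed between `0` and `⟪w - v, Y w - Y v⟫`,
which is `o(‖w - v‖)` by continuity of `Y`. -/
theorem hasGradientAt_fenchel (hc : ConvexOn ℝ univ φ) (hd : Differentiable ℝ φ)
    (hY : ∀ v, gradient φ (Y v) = v) {v : EuclideanSpace ℝ (Fin n)} (hYv : ContinuousAt Y v) :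
    HasGradientAt (fenchel φ) (Y v) v := by
  rw [hasGradientAt_iff_isLittleO, Asymptotics.isLittleO_iff]
  intro c hc0
  filter_upwards [hYv.eventually (closedBall_mem_nhds (Y v) hc0)] with w hw
  rw [Real.norm_of_nonneg (fenchel_sub_fenchel_sub_inner_nonneg hc hd hY v w)]
  calc fenchel φ w - fenchel φ v - ⟪Y v, w - v⟫ ≤ ⟪w - v, Y w - Y v⟫ :=
        fenchel_sub_fenchel_sub_inner_le hc hd hY v w
    _ ≤ ‖w - v‖ * ‖Y w - Y v‖ := real_inner_le_norm _ _
    _ ≤ c * ‖w - v‖ := by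
        rw [mul_comm]
        exact mul_le_mul_of_nonneg_right (mem_closedBall_iff_norm.mp hw) (norm_nonneg _)

theorem bregman_fenchel_nonneg (hc : ConvexOn ℝ univ φ) (hd : Differentiable ℝ φ)
    (hY : ∀ v, gradient φ (Y v) = v) {v : EuclideanSpace ℝ (Fin n)} (hYv : ContinuousAt Y v)
    (w : EuclideanSpace ℝ (Fin n)) :
    0 ≤ bregman (fenchel φ) w v := by
  rw [bregman, (hasGradientAt_fenchel hc hd hY hYv).gradient]
  exact fenchel_sub_fenchel_sub_inner_nonneg hc hd hY v w

theorem HasDerivAt.bregman_left {ψ : EuclideanSpace ℝ (Fin n) → ℝ}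
    {x : ℝ → EuclideanSpace ℝ (Fin n)} {g x' : EuclideanSpace ℝ (Fin n)} {t : ℝ}
    (y : EuclideanSpace ℝ (Fin n))
    (hψ : HasGradientAt ψ g (x t)) (hx : HasDerivAt x x' t) :
    HasDerivAt (fun s => bregman ψ (x s) y) ⟪g - gradient ψ y, x'⟫ t := by
  have hψx : HasDerivAt (fun s => ψ (x s)) ⟪g, x'⟫ t := by
    have := hψ.hasFDerivAt.comp_hasDerivAt t hx
    rw [InnerProductSpace.toDual_apply_apply] at this
    exact this
  have hlin : HasDerivAt (fun s => ⟪gradient ψ y, x s - y⟫) ⟪gradient ψ y, x'⟫ t := by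
    simpa using (hasDerivAt_const t (gradient ψ y)).inner ℝ (hx.sub_const y)
  rw [inner_sub_left]
  exact (hψx.sub_const (ψ y)).sub hlin

end Fenchel

section Lyapunov

theorem sub_le_mul_sub_of_hasDerivAt_le {V V' : ℝ → ℝ} {a b c : ℝ} (hab : a ≤ b)
    (hV : ∀ t ∈ Icc a b, HasDerivAt V (V' t) t) (hV' : ∀ t ∈ Icc a b, V' t ≤ c) :
    V b - V a ≤ c * (b - a) :=
  (convex_Icc a b).image_sub_le_mul_sub_of_deriv_le
    (fun t ht => (hV t ht).continuousAt.continuousWithinAt)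
    (fun t ht => (hV t (interior_subset ht)).differentiableAt.differentiableWithinAt)
    (fun t ht => (hV t (interior_subset ht)).deriv ▸ hV' t (interior_subset ht))
    a (left_mem_Icc.2 hab) b (right_mem_Icc.2 hab) hab

theorem antitoneOn_Ici_of_hasDerivAt_nonpos {V V' : ℝ → ℝ} {a : ℝ}
    (hV : ∀ t ≥ a, HasDerivAt V (V' t) t) (hV' : ∀ t ≥ a, V' t ≤ 0) :
    AntitoneOn V (Ici a) := fun s hs t ht hst => by
  have := sub_le_mul_sub_of_hasDerivAt_le hst (fun τ hτ => hV τ (le_trans hs hτ.1))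
    (fun τ hτ => hV' τ (le_trans hs hτ.1))
  linarith

theorem le_sub_mul_of_hasDerivAt_neg_of_le_dist {X : Type*} [PseudoMetricSpace X]
    {ρ : X → ℝ} {K : Set X} {x : ℝ → X} {V : ℝ → ℝ} {xbar : X} {M : ℝ≥0} {ε δ η t : ℝ}
    (hM : LipschitzOnWith M x (Ici 0)) (hη : 0 ≤ η) (hMη : M * η ≤ ε / 2)
    (hρδ : ∀ z ∈ K, ε / 2 ≤ dist z xbar → δ ≤ ρ z)
    (hxK : ∀ t ≥ 0, x t ∈ K) (hV : ∀ t ≥ 0, HasDerivAt V (-ρ (x t)) t) (ht : 0 ≤ t)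
    (hεt : ε ≤ dist (x t) xbar) : V (t + η) ≤ V t - δ * η := by
  have hwindow : ∀ τ ∈ Icc t (t + η), -ρ (x τ) ≤ -δ := fun τ hτ => by
    have hτ0 : 0 ≤ τ := ht.trans hτ.1
    have hnear : dist (x τ) (x t) ≤ ε / 2 := calc
      dist (x τ) (x t) ≤ M * dist τ t := hM.dist_le_mul τ hτ0 t ht
      _ ≤ M * η := by
        gcongr
        rw [Real.dist_eq, abs_of_nonneg] <;> linarith [hτ.1, hτ.2]
      _ ≤ ε / 2 := hMη
    have := hρδ (x τ) (hxK τ hτ0) (by linarith [dist_triangle_left (x t) xbar (x τ)])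
    linarith
  have := sub_le_mul_sub_of_hasDerivAt_le (by linarith) (fun τ hτ => hV τ (ht.trans hτ.1))
    hwindow
  linarith

variable {E : Type*} [NormedAddCommGroup E] [NormedSpace ℝ E]

theorem exists_lipschitzOnWith_of_hasDerivAt_mem {u : E → E} {x : ℝ → E} {K : Set E}
    (hK : IsCompact K) (hu : ContinuousOn u K) (hxK : ∀ t ≥ 0, x t ∈ K)
    (hx : ∀ t ≥ 0, HasDerivAt x (u (x t)) t) : ∃ M : ℝ≥0, LipschitzOnWith M x (Ici 0) := by
  obtain ⟨C, hC⟩ := hK.exists_bound_of_continuousOn hu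
  refine ⟨C.toNNReal, (convex_Ici 0).lipschitzOnWith_of_nnnorm_hasDerivWithin_le
    (fun t ht => (hx t ht).hasDerivWithinAt) fun t ht => ?_⟩
  rw [← NNReal.coe_le_coe, coe_nnnorm, Real.coe_toNNReal']
  exact (hC _ (hxK t ht)).trans (le_max_left C 0)

/-- If `x` does not converge, it returns to `{ε ≤ dist · xbar}` at arbitrarily late times. As the
speed is bounded, it then stays a time `η` in the compact set `K ∩ {ε / 2 ≤ dist · xbar}`, where
`ρ ≥ δ > 0`, so each return costs `V` at least `δ * η`. -/
theorem tendsto_of_hasDerivAt_lyapunov {u : E → E} {ρ : E → ℝ} {K : Set E} {x : ℝ → E}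
    {V : ℝ → ℝ} {xbar : E} (hK : IsCompact K) (hu : ContinuousOn u K)
    (hρ : ContinuousOn ρ K) (hρ_nonneg : ∀ z ∈ K, 0 ≤ ρ z)
    (hρ_pos : ∀ z ∈ K, z ≠ xbar → 0 < ρ z) (hxK : ∀ t ≥ 0, x t ∈ K)
    (hx : ∀ t ≥ 0, HasDerivAt x (u (x t)) t) (hV : ∀ t ≥ 0, HasDerivAt V (-ρ (x t)) t)
    (hVbdd : BddBelow (V '' Ici 0)) : Tendsto x atTop (𝓝 xbar) := by
  obtain ⟨M, hM⟩ := exists_lipschitzOnWith_of_hasDerivAt_mem hK hu hxK hx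
  obtain ⟨m, hm⟩ := hVbdd
  have hanti : AntitoneOn V (Ici 0) := antitoneOn_Ici_of_hasDerivAt_nonpos hV
    fun t ht => neg_nonpos.2 (hρ_nonneg _ (hxK t ht))
  rw [Metric.tendsto_atTop]
  by_contra! hfar
  obtain ⟨ε, hε, hfar⟩ := hfar
  obtain ⟨δ, hδ, hρδ⟩ := (hK.inter_right (isClosed_le continuous_const
    (continuous_id.dist continuous_const))).exists_forall_le' (hρ.mono inter_subset_left)
    (a := 0) fun z hz => hρ_pos z hz.1 <| by
      rintro rfl
      have : ε / 2 ≤ dist z z := hz.2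
      simp only [dist_self] at this
      linarith
  set η := ε / (2 * (M + 1))
  have hη : 0 < η := by positivity
  have hMη : M * η ≤ ε / 2 := by
    have : (M + 1) * η = ε / 2 := by simp only [η]; field_simp
    linarith
  have hdesc : ∀ N : ℕ, ∃ t ≥ 0, V t ≤ V 0 - N * (δ * η) := by
    intro N
    induction N with
    | zero => exact ⟨0, le_rfl, by simp⟩
    | succ N ih =>
      obtain ⟨t, ht, hVt⟩ := ih
      obtain ⟨s, hts, hεs⟩ := hfar t
      refine ⟨s + η, by linarith, ?_⟩
      have := hanti ht (ht.trans hts) hts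
      have := le_sub_mul_of_hasDerivAt_neg_of_le_dist hM hη.le hMη
        (fun z hz hzd => hρδ z ⟨hz, hzd⟩) hxK hV (ht.trans hts) hεs
      push_cast
      linarith
  obtain ⟨N, hN⟩ := exists_nat_gt ((V 0 - m) / (δ * η))
  obtain ⟨t, ht, hVt⟩ := hdesc N
  have := hm ⟨t, ht, rfl⟩
  rw [div_lt_iff₀ (by positivity)] at hN
  linarith

end Lyapunov

theorem mirror_descent_stabilizes_general {n : ℕ} (f φ : EuclideanSpace ℝ (Fin n) → ℝ)
    (hf : ContDiff ℝ 1 f) (hfconv : StrictConvexOn ℝ Set.univ f)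
    (ybar : EuclideanSpace ℝ (Fin n)) (hmin : ∀ z, f ybar ≤ f z)
    (hφ : ContDiff ℝ 2 φ) (hφconv : StrictConvexOn ℝ Set.univ φ)
    (hleg : LegendreType φ)
    (xbar : EuclideanSpace ℝ (Fin n)) (hxbar : xbar = gradient φ ybar)
    (hrad : Tendsto (fun z => bregman (fenchel φ) z xbar)
      (cocompact (EuclideanSpace ℝ (Fin n))) atTop)
    (x : ℝ → EuclideanSpace ℝ (Fin n))
    (hode : ∀ t : ℝ, 0 ≤ t →
      HasDerivAt x (-gradient f (gradient (fenchel φ) (x t))) t) :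
    Tendsto x atTop (nhds xbar) := by
  have hφd : Differentiable ℝ φ := hφ.differentiable two_ne_zero
  have hfd : Differentiable ℝ f := hf.differentiable one_ne_zero
  set Y := (isHomeomorph_gradient (hφ.of_le one_le_two) hφconv hleg).homeomorph.symm
  have hY : ∀ v, gradient φ (Y v) = v := Y.symm.apply_symm_apply
  have hψ : ∀ v, HasGradientAt (fenchel φ) (Y v) v := fun v =>
    hasGradientAt_fenchel hφconv.convexOn hφd hY Y.continuous.continuousAt
  have hYxbar : Y xbar = ybar := hxbar ▸ Y.symm.symm_apply_apply ybar
  have hgradψ : gradient (fenchel φ) = Y := funext fun v => (hψ v).gradient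
  simp only [hgradψ] at hode
  set V := fun t => bregman (fenchel φ) (x t) xbar
  set ρ := fun z => ⟪gradient f (Y z), Y z - ybar⟫
  have hV : ∀ t ≥ 0, HasDerivAt V (-ρ (x t)) t := fun t ht => by
    have := (hode t ht).bregman_left xbar (hψ (x t))
    rwa [hgradψ, hYxbar, inner_neg_right, real_inner_comm] at this
  have hρ_nonneg : ∀ z, 0 ≤ ρ z := fun z =>
    hfconv.convexOn.inner_gradient_sub_nonneg_of_forall_le (hfd _) hmin
  obtain ⟨K, hK, hKc⟩ := mem_cocompact.mp (hrad.eventually_gt_atTop (V 0))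
  have hxK : ∀ t ≥ 0, x t ∈ K := fun t ht => by_contra fun hxt => (hKc hxt).not_ge <|
    antitoneOn_Ici_of_hasDerivAt_nonpos hV (fun s _ => neg_nonpos.2 (hρ_nonneg _))
      self_mem_Ici ht ht
  have hfY : Continuous fun z => gradient f (Y z) := hf.continuous_gradient.comp Y.continuous
  refine tendsto_of_hasDerivAt_lyapunov hK hfY.neg.continuousOn
    (hfY.inner (Y.continuous.sub continuous_const)).continuousOn (fun z _ => hρ_nonneg z)
    (fun z _ hz => ?_) hxK hode hV ⟨0, ?_⟩
  · exact hfconv.inner_gradient_sub_pos_of_forall_le (hfd _) hmin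
      fun h => hz (by rw [← hY z, h, hxbar])
  · rintro _ ⟨t, -, rfl⟩
    exact bregman_fenchel_nonneg hφconv.convexOn hφd hY Y.continuous.continuousAt _

/-- if `x ↦ D_{φ*}(x, x̄)` is radially unbounded, every forward-complete
solution of the mirror-descent closed loop `ẋ = −∇f(∇φ*(x))`, `x(0) = x₀` converges
to `x̄ = ∇φ(ȳ)`; i.e. the feedback control is stabilizing at `x₀`. -/
theorem mirror_descent_stabilizes {n : ℕ} (f φ : EuclideanSpace ℝ (Fin n) → ℝ)
    (hf : ContDiff ℝ 1 f) (hfconv : StrictConvexOn ℝ Set.univ f)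
    (ybar : EuclideanSpace ℝ (Fin n)) (hmin : ∀ z, f ybar ≤ f z)
    (hφ : ContDiff ℝ 2 φ) (hφconv : StrictConvexOn ℝ Set.univ φ)
    (hleg : LegendreType φ)
    (xbar : EuclideanSpace ℝ (Fin n)) (hxbar : xbar = gradient φ ybar)
    (hrad : Tendsto (fun z => bregman (fenchel φ) z xbar)
      (cocompact (EuclideanSpace ℝ (Fin n))) atTop)
    (x₀ : EuclideanSpace ℝ (Fin n)) (x : ℝ → EuclideanSpace ℝ (Fin n))
    (hx0 : x 0 = x₀)
    (hode : ∀ t : ℝ, 0 ≤ t →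
      HasDerivAt x (-gradient f (gradient (fenchel φ) (x t))) t) :
    Tendsto x atTop (nhds xbar) :=
  mirror_descent_stabilizes_general f φ hf hfconv ybar hmin hφ hφconv hleg xbar hxbar hrad x hode
end

section
/- Let f : ℝⁿ → ℝ be C¹ and convex as well as strictly convex with unique global minimizer ȳ, and let φ : ℝⁿ → ℝ be C², strictly convex, Legendre type, with conjugate φ*. Let (x(t), y(t)) be the state and output trajectories of the mirror descent dynamics ẋ(t) = −∇f(∇φ*(x(t))), y(t) = ∇φ*(x(t)), with x(0) = x₀ and y₀ = ∇φ*(x₀). Then for every t > 0, f(y(t)) − f(ȳ) ≤ D_φ(ȳ, y₀) / t. -/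
open scoped RealInnerProductSpace
open Filter MeasureTheory

/-! Strict convexity and the Legendre property make `∇φ` a homeomorphism of `ℝⁿ`, whose inverse is
`∇φ*`; so `x = ∇φ(y)` along the dynamics and `V_p(t) = D_φ(p, y(t)) = φ*(x(t)) − ⟨x(t), p⟩ + φ(p)`
has derivative `⟨y − p, ẋ⟩ = ⟨∇f(y), p − y⟩ ≤ f(p) − f(y)`. Taking `p = y(s)`, where `V_p` vanishes,
shows that `f ∘ y` is nonincreasing; then `V_p(t) + t (f(y(t)) − f(p))` is nonincreasing too, and
`t (f(y(t)) − f(p)) ≤ V_p(0) = D_φ(p, y₀)`. -/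

open Set Function InnerProductSpace
open scoped Topology

section Gradient

variable {E : Type*} [NormedAddCommGroup E] [InnerProductSpace ℝ E] [CompleteSpace E]
  {ψ χ : E → ℝ} {g h z w : E}

lemma HasGradientAt.sub (hψ : HasGradientAt ψ g z) (hχ : HasGradientAt χ h z) :
    HasGradientAt (fun w => ψ w - χ w) (g - h) z := by
  rw [hasGradientAt_iff_hasFDerivAt, map_sub]
  exact hψ.hasFDerivAt.sub hχ.hasFDerivAt

lemma hasGradientAt_inner_left (v z : E) : HasGradientAt (fun w => ⟪v, w⟫) v z := by
  rw [hasGradientAt_iff_hasFDerivAt]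
  exact (toDual ℝ E v).hasFDerivAt

lemma HasGradientAt.comp_hasDerivAt {x : ℝ → E} {x' : E} {t : ℝ}
    (hψ : HasGradientAt ψ g (x t)) (hx : HasDerivAt x x' t) :
    HasDerivAt (fun s => ψ (x s)) ⟪g, x'⟫ t := by
  simpa [toDual_apply_apply, Function.comp_def] using hψ.hasFDerivAt.comp_hasDerivAt t hx

lemma ConvexOn.add_inner_le (hψ : ConvexOn ℝ univ ψ) (hg : HasGradientAt ψ g z) (w : E) :
    ψ z + ⟪g, w - z⟫ ≤ ψ w := by
  let ℓ := AffineMap.lineMap (k := ℝ) z w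
  have hline : HasDerivAt (ψ ∘ ℓ) ⟪g, w - z⟫ 0 :=
    (AffineMap.lineMap_apply_zero (k := ℝ) z w ▸ hg).comp_hasDerivAt
      AffineMap.hasDerivAt_lineMap
  have := (hψ.comp_affineMap ℓ).le_slope_of_hasDerivAt
    (mem_univ 0) (mem_univ 1) one_pos hline
  simp only [slope_def_field, ℓ, comp_apply, AffineMap.lineMap_apply_zero,
    AffineMap.lineMap_apply_one, sub_zero, div_one] at this
  linarith

lemma ConvexOn.inner_sub_nonneg (hψ : ConvexOn ℝ univ ψ) (hz : HasGradientAt ψ g z)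
    (hw : HasGradientAt ψ h w) : 0 ≤ ⟪g - h, z - w⟫ := by
  have h₁ := hψ.add_inner_le hz w
  have h₂ := hψ.add_inner_le hw z
  have : ⟪g - h, z - w⟫ = -⟪g, w - z⟫ - ⟪h, z - w⟫ := by
    rw [← neg_sub z w, inner_neg_right, inner_sub_left]; ring
  linarith

lemma StrictConvexOn.injective_gradient_s11 (hψ : StrictConvexOn ℝ univ ψ)
    (hd : Differentiable ℝ ψ) : Injective (gradient ψ) := by
  intro a b hab
  by_contra hne
  set m : E := (2⁻¹ : ℝ) • a + (2⁻¹ : ℝ) • b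
  have hm : ψ m < 2⁻¹ * ψ a + 2⁻¹ * ψ b := by
    simpa using hψ.2 (mem_univ a) (mem_univ b) hne (by norm_num : (0 : ℝ) < 2⁻¹)
      (by norm_num : (0 : ℝ) < 2⁻¹) (by norm_num)
  have ha := hψ.convexOn.add_inner_le (hd a).hasGradientAt m
  have hb := hψ.convexOn.add_inner_le (hd b).hasGradientAt m
  have hsum : ⟪gradient ψ b, m - a⟫ + ⟪gradient ψ b, m - b⟫ = 0 := by
    rw [← inner_add_right, show (m - a) + (m - b) = 0 by module, inner_zero_right]
  rw [hab] at ha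
  linarith

lemma ConvexOn.exists_eq_zero_of_tendsto_norm [ProperSpace E] (hψ : ConvexOn ℝ univ ψ)
    {G : E → E} (hG : ∀ z, HasGradientAt ψ (G z) z)
    (hcoer : Tendsto (‖G ·‖) (cocompact E) atTop) : ∃ z, G z = 0 := by
  by_contra! hne
  obtain ⟨R, -, hR⟩ := hasBasis_cobounded_norm.eventually_iff.1 <|
    Metric.cobounded_eq_cocompact (α := E) ▸ hcoer.eventually_gt_atTop ‖G 0‖
  set r := max R 1
  have hr : 0 < r := lt_max_of_lt_right one_pos
  have hψc : Continuous ψ := continuous_iff_continuousAt.2 fun z => (hG z).continuousAt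
  obtain ⟨z, hz, hmin⟩ := (isCompact_closedBall (0 : E) r).exists_isMinOn
    ⟨0, Metric.mem_closedBall_self hr.le⟩ hψc.continuousOn
  have hzr : ‖z‖ ≤ r := by simpa using hz
  set u := G z
  have hu : 0 < ‖u‖ := norm_pos_iff.2 (hne z)
  -- minimality on the ball, tested at `w`, gives `⟪u, z⟫ ≤ -r ‖u‖`, hence `‖z‖ = r` and
  -- `‖G 0‖ < ‖u‖`; monotonicity of `G` between `z` and `0` gives `⟪u, z⟫ ≥ -r ‖G 0‖`
  set w : E := -(r / ‖u‖) • u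
  have hw : w ∈ Metric.closedBall (0 : E) r := by
    simp [w, norm_smul, abs_of_pos hr, hu.ne']
  have hopt : 0 ≤ ⟪u, w - z⟫ := by
    have := (hmin.localize.hasFDerivWithinAt_nonneg (hG z).hasFDerivAt.hasFDerivWithinAt
      (sub_mem_posTangentConeAt_of_segment_subset
        ((convex_closedBall (0 : E) r).segment_subset hz hw)))
    simpa [toDual_apply_apply] using this
  have huw : ⟪u, w⟫ = -(r * ‖u‖) := by
    rw [inner_smul_right, real_inner_self_eq_norm_mul_norm]; field_simp
  have hcs₁ := neg_le_of_abs_le (abs_real_inner_le_norm u z)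
  have hcs₂ := neg_le_of_abs_le (abs_real_inner_le_norm (G 0) z)
  have hmono := hψ.inner_sub_nonneg (hG z) (hG 0)
  rw [inner_sub_right] at hopt
  rw [sub_zero, inner_sub_left] at hmono
  have hzr' : r ≤ ‖z‖ := le_of_mul_le_mul_left (by linarith) hu
  have hG0 : ‖G 0‖ < ‖u‖ := hR (le_trans (le_max_left R 1) hzr')
  nlinarith [norm_nonneg (G 0)]

lemma ConvexOn.surjective_gradient_s11 [ProperSpace E] (hψ : ConvexOn ℝ univ ψ)
    (hd : Differentiable ℝ ψ) (hcoer : Tendsto (‖gradient ψ ·‖) (cocompact E) atTop) :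
    Surjective (gradient ψ) := by
  intro v
  have hconv : ConvexOn ℝ univ (fun z => ψ z - ⟪v, z⟫) :=
    hψ.sub ((innerₛₗ ℝ v).concaveOn convex_univ)
  have hcoer' : Tendsto (‖gradient ψ · - v‖) (cocompact E) atTop :=
    tendsto_atTop_mono (fun z => by linarith [norm_sub_norm_le (gradient ψ z) v])
      (tendsto_atTop_add_const_right _ (-‖v‖) hcoer)
  obtain ⟨z, hz⟩ := hconv.exists_eq_zero_of_tendsto_norm
    (fun z => (hd z).hasGradientAt.sub (hasGradientAt_inner_left v z)) hcoer'
  exact ⟨z, sub_eq_zero.1 hz⟩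

lemma StrictConvexOn.isHomeomorph_gradient [ProperSpace E] (hψ : StrictConvexOn ℝ univ ψ)
    (hd : Differentiable ℝ ψ) (hc : Continuous (gradient ψ))
    (hcoer : Tendsto (‖gradient ψ ·‖) (cocompact E) atTop) : IsHomeomorph (gradient ψ) := by
  have hproper : IsProperMap (gradient ψ) := isProperMap_iff_tendsto_cocompact.2
    ⟨hc, by
      rw [← Metric.cobounded_eq_cocompact] at hcoer ⊢
      exact tendsto_norm_atTop_iff_cobounded.1 hcoer⟩
  exact isHomeomorph_iff_continuous_isClosedMap_bijective.2 ⟨hc, hproper.isClosedMap,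
    hψ.injective_gradient_s11 hd, hψ.convexOn.surjective_gradient_s11 hd hcoer⟩

end Gradient

lemma antitoneOn_Ici_of_exists_le {g : ℝ → ℝ} {a : ℝ} (hg : ContinuousOn g (Ici a))
    (h : ∀ s u, a ≤ s → s < u → ∃ ξ ∈ Ioo s u, g ξ ≤ g s) : AntitoneOn g (Ici a) := by
  intro s hs u hu hsu
  have hsub : Icc s u ⊆ {w | g w ≤ g s} := by
    refine IsClosed.Icc_subset_of_forall_exists_gt ?_ (le_refl (g s)) ?_
    · rw [inter_comm]
      exact (hg.mono (Icc_subset_Ici_iff hsu |>.2 hs)).preimage_isClosed_of_isClosed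
        isClosed_Icc isClosed_Iic
    · rintro w ⟨hw, hwI⟩ v hwv
      obtain ⟨ξ, hξ, hgξ⟩ := h w v (le_trans hs hwI.1) hwv
      exact ⟨ξ, le_trans hgξ hw, hξ.1, hξ.2.le⟩
  exact hsub ⟨hsu, le_rfl⟩

section Lyapunov

variable {α : Type*} {f : α → ℝ} {y : ℝ → α}

theorem antitoneOn_of_lyapunov {V V' : α → ℝ → ℝ} (hcont : ContinuousOn (f ∘ y) (Ici 0))
    (hV : ∀ p, ∀ t ≥ 0, HasDerivAt (V p) (V' p t) t)
    (hV' : ∀ p, ∀ t ≥ 0, V' p t ≤ f p - f (y t))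
    (hV_nonneg : ∀ p t, 0 ≤ V p t) (hV_self : ∀ t, V (y t) t = 0) :
    AntitoneOn (f ∘ y) (Ici 0) := by
  refine antitoneOn_Ici_of_exists_le hcont fun s u hs hsu => ?_
  obtain ⟨ξ, hξ, hslope⟩ := exists_hasDerivAt_eq_slope (V (y s)) (V' (y s)) hsu
    (fun w hw => (hV _ w (hs.trans hw.1)).continuousAt.continuousWithinAt)
    (fun w hw => hV _ w (hs.trans hw.1.le))
  have hpos : 0 ≤ V' (y s) ξ := by
    rw [hslope, hV_self]
    exact div_nonneg (by linarith [hV_nonneg (y s) u]) (by linarith)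
  exact ⟨ξ, hξ, by simp only [comp_apply]; linarith [hV' (y s) ξ (hs.trans hξ.1.le)]⟩

theorem sub_le_div_of_lyapunov (hmono : AntitoneOn (f ∘ y) (Ici 0))
    {p : α} {V V' : ℝ → ℝ} (hV : ∀ t ≥ 0, HasDerivAt V (V' t) t)
    (hV' : ∀ t ≥ 0, V' t ≤ f p - f (y t)) (hV_nonneg : ∀ t, 0 ≤ V t)
    {t : ℝ} (ht : 0 < t) : f (y t) - f p ≤ V 0 / t := by
  set c := f (y t) - f p
  -- `s ↦ V s + s c` has derivative `≤ f (y t) - f (y s) ≤ 0` on `[0, t]`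
  have hW : ∀ s ≥ 0, HasDerivAt (fun s => V s + s * c) (V' s + c) s := fun s hs =>
    (hV s hs).add (hasDerivAt_mul_const c)
  obtain ⟨ξ, hξ, hslope⟩ := exists_hasDerivAt_eq_slope _ _ ht
    (fun s hs => (hW s hs.1).continuousAt.continuousWithinAt) (fun s hs => hW s hs.1.le)
  have hneg : V' ξ + c ≤ 0 := by
    have : f (y t) ≤ f (y ξ) := hmono (mem_Ici.2 hξ.1.le) (mem_Ici.2 ht.le) hξ.2.le
    linarith [hV' ξ hξ.1.le]
  rw [hslope, div_nonpos_iff] at hneg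
  rw [le_div_iff₀ ht]
  rcases hneg with ⟨-, h⟩ | ⟨h, -⟩
  · linarith
  · linarith [hV_nonneg t]

end Lyapunov

section Legendre

variable {n : ℕ} {φ : EuclideanSpace ℝ (Fin n) → ℝ}

local notation "H" => EuclideanSpace ℝ (Fin n)

lemma ContDiff.continuous_gradient_s11 {k : WithTop ℕ∞} (hφ : ContDiff ℝ k φ) (hk : k ≠ 0) :
    Continuous (gradient φ) :=
  (toDual ℝ H).symm.continuous.comp (hφ.continuous_fderiv hk)

@[simp]
lemma bregman_self (y : H) : bregman φ y y = 0 := by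
  simp [bregman]

lemma bregman_nonneg (hφ : ConvexOn ℝ univ φ) {y' : H} (hd : DifferentiableAt ℝ φ y') (y : H) :
    0 ≤ bregman φ y y' := by
  have := hφ.add_inner_le hd.hasGradientAt y
  rw [bregman]
  linarith

lemma bregman_add_bregman (y y' : H) :
    bregman φ y y' + bregman φ y' y = ⟪gradient φ y - gradient φ y', y - y'⟫ := by
  simp only [bregman, inner_sub_left, inner_sub_right]
  ring

lemma fenchel_gradient (hφ : ConvexOn ℝ univ φ) {y : H} (hd : DifferentiableAt ℝ φ y) :
    fenchel φ (gradient φ y) = ⟪gradient φ y, y⟫ - φ y := by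
  have hle : ∀ z, ⟪gradient φ y, z⟫ - φ z ≤ ⟪gradient φ y, y⟫ - φ y := fun z => by
    have := hφ.add_inner_le hd.hasGradientAt z
    rw [inner_sub_right] at this
    linarith
  exact le_antisymm (ciSup_le hle) (le_ciSup ⟨_, forall_mem_range.2 hle⟩ y)

/-- The duality `D_φ(y, y') = D_{φ*}(∇φ y', ∇φ y)`, once `∇φ* (∇φ y) = y` is known. -/
lemma fenchel_sub_fenchel_sub_inner (hφ : ConvexOn ℝ univ φ) {y y' : H}
    (hy : DifferentiableAt ℝ φ y) (hy' : DifferentiableAt ℝ φ y') :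
    fenchel φ (gradient φ y') - fenchel φ (gradient φ y) - ⟪y, gradient φ y' - gradient φ y⟫ =
      bregman φ y y' := by
  rw [fenchel_gradient hφ hy, fenchel_gradient hφ hy', bregman, inner_sub_right, inner_sub_right,
    real_inner_comm (gradient φ y') y, real_inner_comm (gradient φ y) y]
  ring

lemma hasGradientAt_fenchel_s11 (hφ : ConvexOn ℝ univ φ) (hd : Differentiable ℝ φ) {Z : H → H}
    (hZ : ∀ v, gradient φ (Z v) = v) {v : H} (hZc : ContinuousAt Z v) :
    HasGradientAt (fenchel φ) (Z v) v := by
  rw [hasGradientAt_iff_isLittleO, Asymptotics.isLittleO_iff]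
  intro c hc
  have hnear : ∀ᶠ u in 𝓝 v, ‖Z u - Z v‖ < c :=
    (tendsto_iff_norm_sub_tendsto_zero.1 hZc).eventually_lt_const hc
  filter_upwards [hnear] with u hu
  -- the remainder is `D_φ(Z v, Z u)`, squeezed by the symmetrised divergence
  have hrem : fenchel φ u - fenchel φ v - ⟪Z v, u - v⟫ = bregman φ (Z v) (Z u) := by
    simpa only [hZ] using fenchel_sub_fenchel_sub_inner hφ (hd (Z v)) (hd (Z u))
  have hsym := bregman_add_bregman (φ := φ) (Z u) (Z v)
  rw [hZ, hZ] at hsym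
  have h₁ := bregman_nonneg hφ (hd (Z u)) (Z v)
  have h₂ := bregman_nonneg hφ (hd (Z v)) (Z u)
  rw [hrem, Real.norm_eq_abs, abs_of_nonneg h₁]
  calc bregman φ (Z v) (Z u) ≤ ⟪u - v, Z u - Z v⟫ := by linarith
    _ ≤ ‖u - v‖ * ‖Z u - Z v‖ := real_inner_le_norm _ _
    _ ≤ c * ‖u - v‖ := by rw [mul_comm]; gcongr

lemma hasDerivAt_bregman_comp (hφ : ConvexOn ℝ univ φ) (hd : Differentiable ℝ φ) {Z : H → H}
    (hZ : ∀ v, gradient φ (Z v) = v) (hZc : Continuous Z) (p : H) {x : ℝ → H} {x' : H} {t : ℝ}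
    (hx : HasDerivAt x x' t) :
    HasDerivAt (fun s => bregman φ p (Z (x s))) ⟪Z (x t) - p, x'⟫ t := by
  have hV : ∀ s, bregman φ p (Z (x s)) =
      fenchel φ (x s) - ⟪p, x s⟫ - (fenchel φ (gradient φ p) - ⟪p, gradient φ p⟫) := fun s => by
    rw [← fenchel_sub_fenchel_sub_inner hφ (hd p) (hd (Z (x s))), hZ, inner_sub_right]
    ring
  simp only [hV]
  exact (((hasGradientAt_fenchel_s11 hφ hd hZ hZc.continuousAt).sub
    (hasGradientAt_inner_left p _)).comp_hasDerivAt hx).sub_const _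

end Legendre

theorem mirror_descent_convex_rate_general {n : ℕ} (f φ : EuclideanSpace ℝ (Fin n) → ℝ)
    (hf : ContDiff ℝ 1 f) (hfconv : StrictConvexOn ℝ Set.univ f)
    (ybar : EuclideanSpace ℝ (Fin n))
    (hφ : ContDiff ℝ 2 φ) (hφconv : StrictConvexOn ℝ Set.univ φ)
    (hleg : LegendreType φ)
    (x₀ y₀ : EuclideanSpace ℝ (Fin n))
    (x y : ℝ → EuclideanSpace ℝ (Fin n)) (hx0 : x 0 = x₀)
    (hode : ∀ t : ℝ, 0 ≤ t →
      HasDerivAt x (-gradient f (gradient (fenchel φ) (x t))) t)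
    (hy : y = fun t => gradient (fenchel φ) (x t))
    (hy₀ : y₀ = gradient (fenchel φ) x₀) :
    ∀ t : ℝ, 0 < t → f (y t) - f ybar ≤ bregman φ ybar y₀ / t := by
  intro t ht
  have hφd : Differentiable ℝ φ := hφ.differentiable two_ne_zero
  have hfd : Differentiable ℝ f := hf.differentiable one_ne_zero
  set e := (hφconv.isHomeomorph_gradient hφd (hφ.continuous_gradient_s11 two_ne_zero) hleg).homeomorph
  have hG : gradient (fenchel φ) = e.symm := gradient_eq fun v =>
    hasGradientAt_fenchel_s11 hφconv.convexOn hφd e.apply_symm_apply e.symm.continuous.continuousAt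
  subst hy hy₀
  rw [hG] at hode ⊢
  have hV := fun p s (hs : 0 ≤ s) =>
    hasDerivAt_bregman_comp hφconv.convexOn hφd e.apply_symm_apply e.symm.continuous p (hode s hs)
  -- convexity of `f` makes `D_φ(p, y(s))` a Lyapunov function
  have hV' : ∀ p, ∀ s ≥ 0, ⟪e.symm (x s) - p, -gradient f (e.symm (x s))⟫ ≤
      f p - f (e.symm (x s)) := fun p s _ => by
    have := hfconv.convexOn.add_inner_le (hfd (e.symm (x s))).hasGradientAt p
    rw [inner_neg_right, ← inner_neg_left, neg_sub, real_inner_comm]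
    linarith
  have hcont : ContinuousOn (fun s => f (e.symm (x s))) (Ici 0) := fun s hs =>
    ((hfd.continuous.comp e.symm.continuous).continuousAt.comp
      (hode s hs).continuousAt).continuousWithinAt
  have hmono := antitoneOn_of_lyapunov (V := fun p s => bregman φ p (e.symm (x s))) hcont hV hV'
    (fun p s => bregman_nonneg hφconv.convexOn (hφd _) p) (fun s => bregman_self _)
  simpa [hx0] using sub_le_div_of_lyapunov hmono (hV ybar) (hV' ybar)
    (fun s => bregman_nonneg hφconv.convexOn (hφd _) ybar) ht

/-- convex rate: along the mirror descent dynamics,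
`f(y(t)) − f(ȳ) ≤ D_φ(ȳ, y₀) / t` for every `t > 0`. -/
theorem mirror_descent_convex_rate {n : ℕ} (f φ : EuclideanSpace ℝ (Fin n) → ℝ)
    (hf : ContDiff ℝ 1 f) (hfconv : StrictConvexOn ℝ Set.univ f)
    (ybar : EuclideanSpace ℝ (Fin n)) (hmin : ∀ z, f ybar ≤ f z)
    (hφ : ContDiff ℝ 2 φ) (hφconv : StrictConvexOn ℝ Set.univ φ)
    (hleg : LegendreType φ)
    (x₀ y₀ : EuclideanSpace ℝ (Fin n))
    (x y : ℝ → EuclideanSpace ℝ (Fin n)) (hx0 : x 0 = x₀)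
    (hode : ∀ t : ℝ, 0 ≤ t →
      HasDerivAt x (-gradient f (gradient (fenchel φ) (x t))) t)
    (hy : y = fun t => gradient (fenchel φ) (x t))
    (hy₀ : y₀ = gradient (fenchel φ) x₀) :
    ∀ t : ℝ, 0 < t → f (y t) - f ybar ≤ bregman φ ybar y₀ / t :=
  mirror_descent_convex_rate_general f φ hf hfconv ybar hφ hφconv hleg x₀ y₀ x y hx0 hode hy hy₀
end

section
/- Let f : ℝⁿ → ℝ be C¹ and strictly convex with unique global minimizer ȳ, let φ : ℝⁿ → ℝ be C², strictly convex, Legendre type, with conjugate φ* whose Hessian ∇²φ*(x) is positive definite (hence invertible) for every x; set x̄ := ∇φ(ȳ), q(x, u) := f(∇φ*(x)) + f*(−u) + ⟨u, ȳ⟩, and for fixed ε > 0, T > 0 define V(x, t) := D_{φ*}(x, x̄) + ε n (T − t). Then for all x, u ∈ ℝⁿ and t ∈ [0, T], ∂_t V(x, t) + ⟨u, ∇_x V(x, t)⟩ + ε · tr( (∇²φ*(x))⁻¹ ∇²_x V(x, t) ) + q(x, u) = f(∇φ*(x)) + f*(−u) + ⟨u, ∇φ*(x)⟩ ≥ 0,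 with equality if and only if u = −∇f(∇φ*(x)); in particular V solves the Hamilton–Jacobi–Bellman equation ∂_t V + min_u { ⟨u, ∇_x V⟩ + ε tr((∇²φ*)⁻¹ ∇²_x V) + q(x, u) } = 0 with terminal condition V(x, T) = D_{φ*}(x, x̄). -/
/-!
By Fenchel–Young, `f y + f* (-u) + ⟪u, y⟫ ≥ 0`, with equality iff `-u = ∇f y`. At `y = ∇φ* x`
this is exactly the HJB residual of `V`: `∇²ₓV = ∇²φ*`, so the trace term is `ε tr I = εn` and
cancels `∂ₜV = -εn`, while `∇ₓV x = ∇φ* x - ∇φ* x̄ = ∇φ* x - ȳ` and the `ȳ`-part cancels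
against `q`.

The Legendre hypotheses make `φ*` differentiable with `∇φ* = (∇φ)⁻¹`: the gradient of a
strictly convex function with coercive gradient is a homeomorphism, and `(∇φ)⁻¹ v` is a
subgradient of `φ*` at `v` depending continuously on `v`.
-/

open scoped RealInnerProductSpace
open Filter MeasureTheory

/-- Hessian matrix of `g` at `z`: `(∇²g(z))_{ij} = ∂_i ∂_j g(z)`, realized as the
matrix of the derivative of the gradient. -/
noncomputable def hessMat {n : ℕ} (g : EuclideanSpace ℝ (Fin n) → ℝ)
    (z : EuclideanSpace ℝ (Fin n)) : Matrix (Fin n) (Fin n) ℝ :=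
  Matrix.of fun i j => fderiv ℝ (gradient g) z (EuclideanSpace.single j 1) i

open Set InnerProductSpace Topology

section ConvexGradient

variable {F : Type*} [NormedAddCommGroup F] [InnerProductSpace ℝ F]
  {g ψ : F → ℝ} {G σ : F → F} {g' v x y : F}

theorem ConvexOn.add_inner_le_of_hasGradientAt [CompleteSpace F] (hg : ConvexOn ℝ univ g)
    (hx : HasGradientAt g g' x) (y : F) : g x + ⟪g', y - x⟫ ≤ g y := by
  have hline : ConvexOn ℝ univ (g ∘ (AffineMap.lineMap x y : ℝ →ᵃ[ℝ] F)) := by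
    simpa using hg.comp_affineMap (AffineMap.lineMap x y : ℝ →ᵃ[ℝ] F)
  have hderiv : HasDerivAt (g ∘ (AffineMap.lineMap x y : ℝ →ᵃ[ℝ] F)) ⟪g', y - x⟫ 0 := by
    have hx' : HasFDerivAt g (toDual ℝ F g') (AffineMap.lineMap x y (0 : ℝ)) := by
      simpa using hx.hasFDerivAt
    simpa [toDual_apply_apply] using hx'.comp_hasDerivAt (0 : ℝ) AffineMap.hasDerivAt_lineMap
  have := hline.le_slope_of_hasDerivAt (mem_univ 0) (mem_univ 1) one_pos hderiv
  simp only [slope_def_field, Function.comp_apply, AffineMap.lineMap_apply_one,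
    AffineMap.lineMap_apply_zero, sub_zero, div_one] at this
  linarith

theorem ConvexOn.sub_inner (hg : ConvexOn ℝ univ g) (v : F) :
    ConvexOn ℝ univ fun z => g z - ⟪v, z⟫ :=
  hg.sub ((innerSL ℝ v).toLinearMap.concaveOn convex_univ)

theorem StrictConvexOn.sub_inner (hg : StrictConvexOn ℝ univ g) (v : F) :
    StrictConvexOn ℝ univ fun z => g z - ⟪v, z⟫ :=
  hg.sub_concaveOn ((innerSL ℝ v).toLinearMap.concaveOn convex_univ)

theorem HasGradientAt.sub_inner [CompleteSpace F] (hx : HasGradientAt g g' x) (v : F) :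
    HasGradientAt (fun z => g z - ⟪v, z⟫) (g' - v) x := by
  rw [hasGradientAt_iff_hasFDerivAt, map_sub]
  exact hx.hasFDerivAt.sub (toDual ℝ F v).hasFDerivAt

theorem StrictConvexOn.injective_of_hasGradientAt [CompleteSpace F] (hg : StrictConvexOn ℝ univ g)
    (hG : ∀ x, HasGradientAt g (G x) x) : Function.Injective G := by
  intro a b hab
  have hmin : ∀ c, G c = G a → IsMinOn (fun z => g z - ⟪G a, z⟫) univ c := fun c hc z _ => by
    have := (hg.convexOn.sub_inner (G a)).add_inner_le_of_hasGradientAt ((hG c).sub_inner (G a)) z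
    rwa [hc, sub_self, inner_zero_left, add_zero] at this
  exact (hg.sub_inner (G a)).eq_of_isMinOn (hmin a rfl) (hmin b hab.symm) (mem_univ a) (mem_univ b)

theorem ConvexOn.exists_gradient_eq_zero_s14 [CompleteSpace F] [ProperSpace F]
    (hg : ConvexOn ℝ univ g) (hG : ∀ x, HasGradientAt g (G x) x)
    (hco : Tendsto (fun z => ‖G z‖) (cocompact F) atTop) : ∃ z, G z = 0 := by
  -- Minimise `g` over a ball `B` outside of which `‖G‖ > ‖G 0‖`. At a minimiser `z` with
  -- `G z ≠ 0`, first-order optimality puts `z` on the sphere with `G z` pointing inward, which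
  -- monotonicity of `G` between `0` and `z` forbids.
  obtain ⟨K, hK, hKG⟩ := mem_cocompact.mp (hco.eventually (eventually_gt_atTop ‖G 0‖))
  obtain ⟨R, hR, hKR⟩ := hK.isBounded.subset_ball_lt 0 0
  obtain ⟨z, hz, hzmin⟩ := (isCompact_closedBall (0 : F) R).exists_isMinOn
    (Metric.nonempty_closedBall.2 hR.le) (HasGradientAt.continuousOn fun x _ => hG x)
  refine ⟨z, by_contra fun hGz => ?_⟩
  have hfirst : ∀ w ∈ Metric.closedBall (0 : F) R, 0 ≤ ⟪G z, w - z⟫ := fun w hw =>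
    hzmin.localize.hasFDerivWithinAt_nonneg (hG z).hasFDerivAt.hasFDerivWithinAt
      (sub_mem_posTangentConeAt_of_segment_subset ((convex_closedBall 0 R).segment_subset hz hw))
  have hGz_pos : 0 < ‖G z‖ := norm_pos_iff.2 hGz
  have hopp := hfirst (-(R / ‖G z‖) • G z) (by
    rw [mem_closedBall_zero_iff, norm_smul, norm_neg, Real.norm_of_nonneg (by positivity),
      div_mul_cancel₀ _ hGz_pos.ne'])
  rw [inner_sub_right, real_inner_smul_right, real_inner_self_eq_norm_sq] at hopp
  have hz_norm : ‖z‖ = R := by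
    refine le_antisymm (mem_closedBall_zero_iff.1 hz) (le_of_mul_le_mul_left ?_ hGz_pos)
    nlinarith [neg_abs_le ⟪G z, z⟫, abs_real_inner_le_norm (G z) z, mul_div_cancel₀ R hGz_pos.ne']
  have hG0 : ‖G 0‖ < ‖G z‖ := hKG fun hzK => by simpa [hz_norm] using hKR hzK
  have hmono : ⟪G 0, z⟫ ≤ ⟪G z, z⟫ := by
    have h0 := hg.add_inner_le_of_hasGradientAt (hG 0) z
    have hz' := hg.add_inner_le_of_hasGradientAt (hG z) 0
    rw [sub_zero] at h0
    rw [zero_sub, inner_neg_right] at hz'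
    linarith
  nlinarith [neg_abs_le ⟪G 0, z⟫, abs_real_inner_le_norm (G 0) z, mul_div_cancel₀ R hGz_pos.ne']

theorem ConvexOn.surjective_of_tendsto_norm_gradient [CompleteSpace F] [ProperSpace F]
    (hg : ConvexOn ℝ univ g) (hG : ∀ x, HasGradientAt g (G x) x)
    (hco : Tendsto (fun z => ‖G z‖) (cocompact F) atTop) : Function.Surjective G := by
  intro v
  have hco' : Tendsto (fun z => ‖G z - v‖) (cocompact F) atTop :=
    tendsto_atTop_mono (fun z => by linarith [norm_sub_norm_le (G z) v])
      (tendsto_atTop_add_const_right _ (-‖v‖) hco)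
  obtain ⟨z, hz⟩ := (hg.sub_inner v).exists_gradient_eq_zero_s14 (fun x => (hG x).sub_inner v) hco'
  exact ⟨z, sub_eq_zero.1 hz⟩

theorem exists_homeomorph_gradient [CompleteSpace F] [ProperSpace F] {φ : F → ℝ}
    (hφ : ContDiff ℝ 1 φ) (hconv : StrictConvexOn ℝ univ φ)
    (hco : Tendsto (fun z => ‖gradient φ z‖) (cocompact F) atTop) :
    ∃ e : F ≃ₜ F, ⇑e = gradient φ := by
  have hG : ∀ x, HasGradientAt φ (gradient φ x) x :=
    fun x => (hφ.differentiable one_ne_zero x).hasGradientAt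
  have hcont : Continuous (gradient φ) :=
    (toDual ℝ F).symm.continuous.comp (hφ.continuous_fderiv one_ne_zero)
  have hproper : IsProperMap (gradient φ) := by
    refine isProperMap_iff_tendsto_cocompact.2 ⟨hcont, ?_⟩
    simpa only [← Metric.cobounded_eq_cocompact, tendsto_norm_atTop_iff_cobounded] using hco
  rw [← isHomeomorph_iff_exists_homeomorph, isHomeomorph_iff_continuous_isClosedMap_bijective]
  exact ⟨hcont, hproper.isClosedMap, hconv.injective_of_hasGradientAt hG,
    hconv.convexOn.surjective_of_tendsto_norm_gradient hG hco⟩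

theorem hasGradientAt_of_le_of_le_inner [CompleteSpace F] (hσ : ContinuousAt σ x)
    (hlow : ∀ y, ψ x + ⟪σ x, y - x⟫ ≤ ψ y) (hup : ∀ y, ψ y ≤ ψ x + ⟪σ y, y - x⟫) :
    HasGradientAt ψ (σ x) x := by
  rw [hasGradientAt_iff_isLittleO]
  have hbound : ∀ y, ‖ψ y - ψ x - ⟪σ x, y - x⟫‖ ≤ ‖‖σ y - σ x‖ * ‖y - x‖‖ := fun y => by
    rw [Real.norm_of_nonneg (by linarith [hlow y]), Real.norm_of_nonneg (by positivity)]
    have := real_inner_le_norm (σ y - σ x) (y - x)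
    rw [inner_sub_left] at this
    linarith [hup y]
  refine (Asymptotics.isBigO_of_le _ hbound).trans_isLittleO ?_
  have hσ' : (fun y => ‖σ y - σ x‖) =o[𝓝 x] fun _ => (1 : ℝ) :=
    (Asymptotics.isLittleO_one_iff ℝ).2 (by simpa using (hσ.sub_const (σ x)).norm)
  simpa using (hσ'.mul_isBigO (Asymptotics.isBigO_refl (fun y => ‖y - x‖) _)).norm_right

theorem ConvexOn.isGreatest_inner_sub_of_hasGradientAt [CompleteSpace F]
    (hψ : ConvexOn ℝ univ ψ) (hy : HasGradientAt ψ v y) :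
    IsGreatest (range fun z => ⟪v, z⟫ - ψ z) (⟪v, y⟫ - ψ y) := by
  refine ⟨⟨y, rfl⟩, ?_⟩
  rintro _ ⟨z, rfl⟩
  have := hψ.add_inner_le_of_hasGradientAt hy z
  rw [inner_sub_right] at this
  linarith

end ConvexGradient

section Euclidean

variable {n : ℕ}

local notation "E" => EuclideanSpace ℝ (Fin n)

theorem fenchel_eq_of_hasGradientAt {ψ : E → ℝ} {v y : E} (hψ : ConvexOn ℝ univ ψ)
    (hy : HasGradientAt ψ v y) : fenchel ψ v = ⟪v, y⟫ - ψ y :=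
  (hψ.isGreatest_inner_sub_of_hasGradientAt hy).isLUB.ciSup_eq

theorem fenchel_young_eq_iff {ψ : E → ℝ} {v y : E} (hψ : ConvexOn ℝ univ ψ)
    (hy : DifferentiableAt ℝ ψ y) (hbdd : BddAbove (range fun z => ⟪v, z⟫ - ψ z)) :
    ψ y + fenchel ψ v = ⟪v, y⟫ ↔ v = gradient ψ y := by
  refine ⟨fun heq => ?_, fun hv => ?_⟩
  · have hmax : IsLocalMax (fun z => ⟪v, z⟫ - ψ z) y :=
      Eventually.of_forall fun z => by
        have : ⟪v, z⟫ - ψ z ≤ fenchel ψ v := le_ciSup hbdd z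
        simp only
        linarith
    have := hmax.hasFDerivAt_eq_zero ((toDual ℝ E v).hasFDerivAt.sub hy.hasGradientAt.hasFDerivAt)
    exact (toDual ℝ E).injective (sub_eq_zero.1 this)
  · rw [fenchel_eq_of_hasGradientAt hψ (hv ▸ hy.hasGradientAt)]
    ring

theorem add_fenchel_neg_add_inner_nonneg {ψ : E → ℝ} {u : E}
    (hbdd : BddAbove (range fun z => ⟪-u, z⟫ - ψ z)) (y : E) :
    0 ≤ ψ y + fenchel ψ (-u) + ⟪u, y⟫ := by
  have : ⟪-u, y⟫ - ψ y ≤ fenchel ψ (-u) := le_ciSup hbdd y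
  rw [inner_neg_left] at this
  linarith

theorem add_fenchel_neg_add_inner_eq_zero_iff {ψ : E → ℝ} {u y : E} (hψ : ConvexOn ℝ univ ψ)
    (hy : DifferentiableAt ℝ ψ y) (hbdd : BddAbove (range fun z => ⟪-u, z⟫ - ψ z)) :
    ψ y + fenchel ψ (-u) + ⟪u, y⟫ = 0 ↔ u = -gradient ψ y := by
  rw [← neg_eq_iff_eq_neg, ← fenchel_young_eq_iff hψ hy hbdd, inner_neg_left]
  constructor <;> intro h <;> linarith

theorem LegendreType.hasGradientAt_fenchel {φ : E → ℝ} (hφ : ContDiff ℝ 1 φ)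
    (hconv : StrictConvexOn ℝ univ φ) (hleg : LegendreType φ) (y : E) :
    HasGradientAt (fenchel φ) y (gradient φ y) := by
  obtain ⟨e, he⟩ := exists_homeomorph_gradient hφ hconv hleg
  have hG : ∀ z, HasGradientAt φ (e z) z :=
    fun z => he ▸ (hφ.differentiable one_ne_zero z).hasGradientAt
  have hval : ∀ z, fenchel φ (e z) = ⟪e z, z⟫ - φ z :=
    fun z => fenchel_eq_of_hasGradientAt hconv.convexOn (hG z)
  have hbdd : ∀ z, BddAbove (range fun w => ⟪e z, w⟫ - φ w) :=
    fun z => (hconv.convexOn.isGreatest_inner_sub_of_hasGradientAt (hG z)).bddAbove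
  -- `e.symm v` is a subgradient of `fenchel φ` at `v`, and it depends continuously on `v`
  suffices HasGradientAt (fenchel φ) (e.symm (e y)) (e y) by
    rwa [e.symm_apply_apply, he] at this
  refine hasGradientAt_of_le_of_le_inner e.symm.continuous.continuousAt (fun v => ?_) (fun v => ?_)
  · obtain ⟨w, rfl⟩ := e.surjective v
    have : ⟪e w, y⟫ - φ y ≤ fenchel φ (e w) := le_ciSup (hbdd w) y
    rw [e.symm_apply_apply, hval, inner_sub_right]
    linarith [real_inner_comm y (e w), real_inner_comm y (e y)]
  · obtain ⟨w, rfl⟩ := e.surjective v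
    have : ⟪e y, w⟫ - φ w ≤ fenchel φ (e y) := le_ciSup (hbdd y) w
    rw [e.symm_apply_apply, hval, hval, inner_sub_right]
    linarith [hval y, real_inner_comm w (e w), real_inner_comm w (e y)]

theorem LegendreType.differentiable_fenchel {φ : E → ℝ} (hφ : ContDiff ℝ 1 φ)
    (hconv : StrictConvexOn ℝ univ φ) (hleg : LegendreType φ) :
    Differentiable ℝ (fenchel φ) := fun v => by
  obtain ⟨e, he⟩ := exists_homeomorph_gradient hφ hconv hleg
  obtain ⟨y, rfl⟩ := e.surjective v
  rw [he]
  exact (hleg.hasGradientAt_fenchel hφ hconv y).differentiableAt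

theorem hasGradientAt_bregman_add_const {ψ : E → ℝ} {g' x : E} (hx : HasGradientAt ψ g' x)
    (y' : E) (c : ℝ) : HasGradientAt (fun z => bregman ψ z y' + c) (g' - gradient ψ y') x := by
  rw [hasGradientAt_iff_hasFDerivAt, map_sub]
  have hlin : HasFDerivAt (fun z => ⟪gradient ψ y', z - y'⟫) (toDual ℝ E (gradient ψ y')) x := by
    simpa only [inner_sub_right, toDual_apply_apply] using
      (toDual ℝ E (gradient ψ y')).hasFDerivAt.sub_const ⟪gradient ψ y', y'⟫
  exact ((hx.hasFDerivAt.sub_const _).sub hlin).add_const c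

theorem hessMat_bregman_add_const {ψ : E → ℝ} (hψ : Differentiable ℝ ψ) (y' : E) (c : ℝ)
    (x : E) : hessMat (fun z => bregman ψ z y' + c) x = hessMat ψ x := by
  have : gradient (fun z => bregman ψ z y' + c) = fun z => gradient ψ z - gradient ψ y' :=
    gradient_eq fun z => hasGradientAt_bregman_add_const (hψ z).hasGradientAt y' c
  simp only [hessMat, this, fderiv_sub_const]

theorem deriv_add_inner_gradient_add_trace_bregman {ψ : E → ℝ} (hψ : Differentiable ℝ ψ)
    {x : E} (hH : IsUnit (hessMat ψ x).det) (y' u : E) (ε T t : ℝ) :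
    deriv (fun s => bregman ψ x y' + ε * n * (T - s)) t
        + ⟪u, gradient (fun z => bregman ψ z y' + ε * n * (T - t)) x⟫
        + ε * ((hessMat ψ x)⁻¹ * hessMat (fun z => bregman ψ z y' + ε * n * (T - t)) x).trace
      = ⟪u, gradient ψ x - gradient ψ y'⟫ := by
  have hderiv : deriv (fun s => bregman ψ x y' + ε * n * (T - s)) t = -(ε * n) := by
    simp
  rw [hderiv, (hasGradientAt_bregman_add_const (hψ x).hasGradientAt y' _).gradient,
    hessMat_bregman_add_const hψ, Matrix.nonsing_inv_mul _ hH, Matrix.trace_one, Fintype.card_fin]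
  ring

end Euclidean

theorem HJB_verification_general {n : ℕ} (f φ : EuclideanSpace ℝ (Fin n) → ℝ)
    (hf : ContDiff ℝ 1 f) (hfconv : StrictConvexOn ℝ Set.univ f)
    (ybar : EuclideanSpace ℝ (Fin n))
    (hfstar : ∀ v : EuclideanSpace ℝ (Fin n),
      BddAbove (Set.range fun z => ⟪v, z⟫ - f z))
    (hφ : ContDiff ℝ 2 φ) (hφconv : StrictConvexOn ℝ Set.univ φ)
    (hleg : LegendreType φ)
    (hPD : ∀ z : EuclideanSpace ℝ (Fin n), (hessMat (fenchel φ) z).PosDef)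
    (xbar : EuclideanSpace ℝ (Fin n)) (hxbar : xbar = gradient φ ybar)
    (q : EuclideanSpace ℝ (Fin n) → EuclideanSpace ℝ (Fin n) → ℝ)
    (hq : q = fun x u => f (gradient (fenchel φ) x) + fenchel f (-u) + ⟪u, ybar⟫)
    (ε T : ℝ)
    (V : EuclideanSpace ℝ (Fin n) → ℝ → ℝ)
    (hV : V = fun z t => bregman (fenchel φ) z xbar + ε * n * (T - t)) :
    (∀ (x u : EuclideanSpace ℝ (Fin n)) (t : ℝ), t ∈ Set.Icc (0:ℝ) T →
      (deriv (fun s => V x s) t + ⟪u, gradient (fun z => V z t) x⟫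
          + ε * Matrix.trace ((hessMat (fenchel φ) x)⁻¹ * hessMat (fun z => V z t) x)
          + q x u
        = f (gradient (fenchel φ) x) + fenchel f (-u) + ⟪u, gradient (fenchel φ) x⟫) ∧
      (0 ≤ f (gradient (fenchel φ) x) + fenchel f (-u) + ⟪u, gradient (fenchel φ) x⟫) ∧
      (deriv (fun s => V x s) t + ⟪u, gradient (fun z => V z t) x⟫
          + ε * Matrix.trace ((hessMat (fenchel φ) x)⁻¹ * hessMat (fun z => V z t) x)
          + q x u = 0
        ↔ u = -gradient f (gradient (fenchel φ) x))) ∧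
    (∀ (x : EuclideanSpace ℝ (Fin n)) (t : ℝ), t ∈ Set.Icc (0:ℝ) T →
      deriv (fun s => V x s) t
        + ⨅ u : EuclideanSpace ℝ (Fin n),
            (⟪u, gradient (fun z => V z t) x⟫
              + ε * Matrix.trace ((hessMat (fenchel φ) x)⁻¹ * hessMat (fun z => V z t) x)
              + q x u)
        = 0) ∧
    (∀ x : EuclideanSpace ℝ (Fin n), V x T = bregman (fenchel φ) x xbar) := by
  have hφ' : ContDiff ℝ 1 φ := hφ.of_le one_le_two
  have key : ∀ x u t, deriv (fun s => V x s) t + ⟪u, gradient (fun z => V z t) x⟫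
      + ε * ((hessMat (fenchel φ) x)⁻¹ * hessMat (fun z => V z t) x).trace + q x u
      = f (gradient (fenchel φ) x) + fenchel f (-u) + ⟪u, gradient (fenchel φ) x⟫ := by
    intro x u t
    subst hV hq hxbar
    rw [deriv_add_inner_gradient_add_trace_bregman (hleg.differentiable_fenchel hφ' hφconv)
      (hPD x).det_pos.ne'.isUnit, (hleg.hasGradientAt_fenchel hφ' hφconv ybar).gradient,
      inner_sub_right]
    ring
  have young := fun x u => add_fenchel_neg_add_inner_nonneg (hfstar (-u)) (gradient (fenchel φ) x)
  have young_eq_iff := fun x u => add_fenchel_neg_add_inner_eq_zero_iff (u := u) hfconv.convexOn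
    (hf.differentiable one_ne_zero (gradient (fenchel φ) x)) (hfstar (-u))
  refine ⟨fun x u t _ => ⟨key x u t, young x u, by rw [key]; exact young_eq_iff x u⟩,
    fun x t _ => ?_, fun x => by simp [hV]⟩
  refine add_eq_zero_iff_eq_neg'.2 (IsLeast.isGLB ?_).ciInf_eq
  refine ⟨⟨-gradient f (gradient (fenchel φ) x), ?_⟩, ?_⟩
  · linarith [key x (-gradient f (gradient (fenchel φ) x)) t, (young_eq_iff x _).2 rfl]
  · rintro _ ⟨u, rfl⟩
    linarith [key x u t, young x u]

/-- `V(x,t) = D_{φ*}(x, x̄) + εn(T−t)` satisfies, for all `x`, `u` and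
`t ∈ [0,T]`,
`∂ₜV + ⟨u, ∇ₓV⟩ + ε tr((∇²φ*)⁻¹ ∇²ₓV) + q(x,u) = f(∇φ*(x)) + f*(−u) + ⟨u, ∇φ*(x)⟩ ≥ 0`,
with equality iff `u = −∇f(∇φ*(x))`; in particular `V` solves the HJB equation with
terminal condition `V(·,T) = D_{φ*}(·, x̄)`.  `hfstar` records finiteness of `f*`. -/
theorem HJB_verification {n : ℕ} (f φ : EuclideanSpace ℝ (Fin n) → ℝ)
    (hf : ContDiff ℝ 1 f) (hfconv : StrictConvexOn ℝ Set.univ f)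
    (ybar : EuclideanSpace ℝ (Fin n)) (hmin : ∀ z, f ybar ≤ f z)
    (hfstar : ∀ v : EuclideanSpace ℝ (Fin n),
      BddAbove (Set.range fun z => ⟪v, z⟫ - f z))
    (hφ : ContDiff ℝ 2 φ) (hφconv : StrictConvexOn ℝ Set.univ φ)
    (hleg : LegendreType φ)
    (hPD : ∀ z : EuclideanSpace ℝ (Fin n), (hessMat (fenchel φ) z).PosDef)
    (xbar : EuclideanSpace ℝ (Fin n)) (hxbar : xbar = gradient φ ybar)
    (q : EuclideanSpace ℝ (Fin n) → EuclideanSpace ℝ (Fin n) → ℝ)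
    (hq : q = fun x u => f (gradient (fenchel φ) x) + fenchel f (-u) + ⟪u, ybar⟫)
    (ε T : ℝ) (hε : 0 < ε) (hT : 0 < T)
    (V : EuclideanSpace ℝ (Fin n) → ℝ → ℝ)
    (hV : V = fun z t => bregman (fenchel φ) z xbar + ε * n * (T - t)) :
    (∀ (x u : EuclideanSpace ℝ (Fin n)) (t : ℝ), t ∈ Set.Icc (0:ℝ) T →
      (deriv (fun s => V x s) t + ⟪u, gradient (fun z => V z t) x⟫
          + ε * Matrix.trace ((hessMat (fenchel φ) x)⁻¹ * hessMat (fun z => V z t) x)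
          + q x u
        = f (gradient (fenchel φ) x) + fenchel f (-u) + ⟪u, gradient (fenchel φ) x⟫) ∧
      (0 ≤ f (gradient (fenchel φ) x) + fenchel f (-u) + ⟪u, gradient (fenchel φ) x⟫) ∧
      (deriv (fun s => V x s) t + ⟪u, gradient (fun z => V z t) x⟫
          + ε * Matrix.trace ((hessMat (fenchel φ) x)⁻¹ * hessMat (fun z => V z t) x)
          + q x u = 0
        ↔ u = -gradient f (gradient (fenchel φ) x))) ∧
    (∀ (x : EuclideanSpace ℝ (Fin n)) (t : ℝ), t ∈ Set.Icc (0:ℝ) T →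
      deriv (fun s => V x s) t
        + ⨅ u : EuclideanSpace ℝ (Fin n),
            (⟪u, gradient (fun z => V z t) x⟫
              + ε * Matrix.trace ((hessMat (fenchel φ) x)⁻¹ * hessMat (fun z => V z t) x)
              + q x u)
        = 0) ∧
    (∀ x : EuclideanSpace ℝ (Fin n), V x T = bregman (fenchel φ) x xbar) :=
  HJB_verification_general f φ hf hfconv ybar hfstar hφ hφconv hleg hPD xbar hxbar q hq ε T V hV
end
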